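/- arXiv:1704.07034 — 4 statements merged into one kernel-verified Lean document; each statement's English description precedes it below -/
import Mathlib

section
/- In a category with finite limits and colimits, the relation on cospans from x to y defined by f ∼ g iff there exists a span of cospans from f to g (a commuting diagram with a span between the apexes compatible with the legs) is an equivalence relation. -/
open CategoryTheory CategoryTheory.Limits

universe v u

structure Cospan (C : Type u) [Category.{v} C] (x y : C) where
  apex : C
  l : x ⟶ apex
  r : y ⟶ apex

variable {C : Type u} [Category.{v} C]

def Cospan.id (x : C) : Cospan C x x := ⟨x, 𝟙 x, 𝟙 x⟩

noncomputable def Cospan.comp [HasPushouts C] {x y z : C}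
    (f : Cospan C x y) (g : Cospan C y z) : Cospan C x z :=
  ⟨pushout f.r g.l, f.l ≫ pushout.inl f.r g.l, g.r ≫ pushout.inr f.r g.l⟩

def Cospan.Isomorphic {x y : C} (f g : Cospan C x y) : Prop :=
  ∃ e : f.apex ≅ g.apex, f.l ≫ e.hom = g.l ∧ f.r ≫ e.hom = g.r

def SpanOfCospansRel {x y : C} (f g : Cospan C x y) : Prop :=
  ∃ (K : C) (p : K ⟶ f.apex) (q : K ⟶ g.apex) (i : x ⟶ K) (j : y ⟶ K),
    i ≫ p = f.l ∧ i ≫ q = g.l ∧ j ≫ p = f.r ∧ j ≫ q = g.r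

namespace SpanOfCospansRel

variable {x y : C}

theorem refl (f : Cospan C x y) : SpanOfCospansRel f f :=
  ⟨f.apex, 𝟙 _, 𝟙 _, f.l, f.r, Category.comp_id _, Category.comp_id _,
    Category.comp_id _, Category.comp_id _⟩

theorem symm {f g : Cospan C x y} : SpanOfCospansRel f g → SpanOfCospansRel g f
  | ⟨K, p, q, i, j, hip, hiq, hjp, hjq⟩ => ⟨K, q, p, i, j, hiq, hip, hjq, hjp⟩

/-- The composite span is the pullback of the two legs into `g.apex`; the feet `x` and `y`
factor through it because both spans restrict to `g.l` and `g.r` there. -/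
theorem trans [HasPullbacks C] {f g h : Cospan C x y} :
    SpanOfCospansRel f g → SpanOfCospansRel g h → SpanOfCospansRel f h
  | ⟨K, p, q, i, j, hip, hiq, hjp, hjq⟩, ⟨L, p', q', i', j', hip', hiq', hjp', hjq'⟩ =>
    ⟨pullback q p', pullback.fst q p' ≫ p, pullback.snd q p' ≫ q',
      pullback.lift i i' (hiq.trans hip'.symm), pullback.lift j j' (hjq.trans hjp'.symm),
      by rw [pullback.lift_fst_assoc, hip], by rw [pullback.lift_snd_assoc, hiq'],
      by rw [pullback.lift_fst_assoc, hjp], by rw [pullback.lift_snd_assoc, hjq']⟩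

end SpanOfCospansRel

theorem stmt5_general [HasFiniteLimits C] (x y : C) :
    Equivalence (SpanOfCospansRel (C := C) (x := x) (y := y)) :=
  ⟨SpanOfCospansRel.refl, SpanOfCospansRel.symm, SpanOfCospansRel.trans⟩

/-- In a category with finite limits and colimits, the relation on cospans
from  to  given by the existence of a span of cospans is an equivalence
relation. -/
theorem stmt5 [HasFiniteLimits C] [HasFiniteColimits C] (x y : C) :
    Equivalence (SpanOfCospansRel (C := C) (x := x) (y := y)) :=
  stmt5_general x y
end

section
/- In a category with finite limits and colimits, spans of cospans compose horizontally via pushout: given a span of cospans α : f ⇒ g between cospans from x to y and a span of cospans α' : f' ⇒ g' between cospans from y to z, pushing out along the copies of y yields a span of cospans from f∘f' to g∘g' (the pushout-composites), i.e. horizontal composition of 2-cells is well-defined. -/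
open CategoryTheory CategoryTheory.Limits

universe v u

variable {C : Type u} [Category.{v} C]

/-- A span of cospans from `f` to `g` (both cospans from `x` to `y`). -/
structure SpCsp {x y : C} (f g : Cospan C x y) where
  apex : C
  toDom : apex ⟶ f.apex
  toCod : apex ⟶ g.apex
  fromL : x ⟶ apex
  fromR : y ⟶ apex
  wDL : fromL ≫ toDom = f.l
  wCL : fromL ≫ toCod = g.l
  wDR : fromR ≫ toDom = f.r
  wCR : fromR ≫ toCod = g.r

/-- Horizontal composition of spans of cospans via pushout: given
`α : f ⇒ g` between cospans from `x` to `y` and `α' : f' ⇒ g'` between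
cospans from `y` to `z`, the pushout `K +_y K'` of the apexes over `y`, with
the induced maps, is a span of cospans from the composite cospan `f.comp f'`
to the composite cospan `g.comp g'`: all four required squares commute. -/
theorem stmt7 [HasPushouts C] {x y z : C} {f g : Cospan C x y} {f' g' : Cospan C y z}
    (α : SpCsp f g) (α' : SpCsp f' g') :
    ((α.fromL ≫ pushout.inl α.fromR α'.fromL) ≫
        pushout.desc (α.toDom ≫ pushout.inl f.r f'.l) (α'.toDom ≫ pushout.inr f.r f'.l)
          (by rw [← Category.assoc, α.wDR, ← Category.assoc, α'.wDL, pushout.condition]) =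
      (f.comp f').l) ∧
    ((α.fromL ≫ pushout.inl α.fromR α'.fromL) ≫
        pushout.desc (α.toCod ≫ pushout.inl g.r g'.l) (α'.toCod ≫ pushout.inr g.r g'.l)
          (by rw [← Category.assoc, α.wCR, ← Category.assoc, α'.wCL, pushout.condition]) =
      (g.comp g').l) ∧
    ((α'.fromR ≫ pushout.inr α.fromR α'.fromL) ≫
        pushout.desc (α.toDom ≫ pushout.inl f.r f'.l) (α'.toDom ≫ pushout.inr f.r f'.l)
          (by rw [← Category.assoc, α.wDR, ← Category.assoc, α'.wDL, pushout.condition]) =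
      (f.comp f').r) ∧
    ((α'.fromR ≫ pushout.inr α.fromR α'.fromL) ≫
        pushout.desc (α.toCod ≫ pushout.inl g.r g'.l) (α'.toCod ≫ pushout.inr g.r g'.l)
          (by rw [← Category.assoc, α.wCR, ← Category.assoc, α'.wCL, pushout.condition]) =
      (g.comp g').r) := by
  refine ⟨?_, ?_, ?_, ?_⟩ <;>
    simp [Cospan.comp, Category.assoc, pushout.inl_desc, pushout.inr_desc,
      reassoc_of% α.wDL, reassoc_of% α.wCL, reassoc_of% α'.wDR, reassoc_of% α'.wCR]
end

section
/- In a cocartesian monoidal category (monoidal structure given by finite coproducts with initial unit 0), every object x is self-dual in the bicategory of cospans: the cospans e = (x+x →∇ x ← 0) and c = (0 → x ←∇ x+x) satisfy the snake identities up to isomorphism of cospans, i.e. the composite cospan x →ℓ x+x ←(x+∇) x+x+x →(∇+x) x+x ←r x is isomorphic to the identity cospan on x. -/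
/-!
The square with sides `x+∇, ∇+x : x+x+x ⟶ x+x` and `∇, ∇ : x+x ⟶ x` is a pushout: a cocone
`(u, v)` under the span is forced to have `u = v` with `u` equal on both summands, so it factors
uniquely through `∇`, via `ℓ ≫ u`. The composite cospan is therefore `x` with legs `ℓ ≫ ∇ = 𝟙`
and `r ≫ ∇ = 𝟙`.
-/

open CategoryTheory CategoryTheory.Limits

universe v u

variable {C : Type u} [Category.{v} C]

theorem Cospan.comp_isomorphic_of_isPushout [HasPushouts C] {x y z P : C}
    {f : Cospan C x y} {g : Cospan C y z} {a : f.apex ⟶ P} {b : g.apex ⟶ P}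
    (h : IsPushout f.r g.l a b) {l : x ⟶ P} {r : z ⟶ P} (hl : f.l ≫ a = l) (hr : g.r ≫ b = r) :
    (f.comp g).Isomorphic ⟨P, l, r⟩ :=
  ⟨h.isoPushout.symm, by simp [Cospan.comp, ← hl], by simp [Cospan.comp, ← hr]⟩

section Codiag

variable [HasBinaryCoproducts C] (x : C)

theorem eq_codiag_comp_of_comp_eq {W : C} {u v : x ⨿ x ⟶ W}
    (h : coprod.desc (𝟙 (x ⨿ x)) coprod.inr ≫ u = coprod.map (codiag x) (𝟙 x) ≫ v) :
    u = codiag x ≫ coprod.inl ≫ u ∧ v = codiag x ≫ coprod.inl ≫ u := by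
  have h₁ := coprod.inl ≫= coprod.inl ≫= h
  have h₂ := coprod.inr ≫= coprod.inl ≫= h
  have h₃ := coprod.inr ≫= h
  simp only [coprod.inl_desc_assoc, coprod.inr_desc_assoc, coprod.inl_map_assoc,
    coprod.inr_map_assoc, Category.id_comp] at h₁ h₂ h₃
  have huv : u = v := coprod.hom_ext h₁ h₃
  have hu : u = codiag x ≫ coprod.inl ≫ u := by
    apply coprod.hom_ext <;> simp only [codiag, coprod.inl_desc_assoc, coprod.inr_desc_assoc,
      Category.id_comp]
    rw [h₂, h₁]
  exact ⟨hu, huv ▸ hu⟩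

theorem isPushout_codiag :
    IsPushout (coprod.desc (𝟙 (x ⨿ x)) coprod.inr) (coprod.map (codiag x) (𝟙 x))
      (codiag x) (codiag x) := by
  have w : coprod.desc (𝟙 (x ⨿ x)) coprod.inr ≫ codiag x =
      coprod.map (codiag x) (𝟙 x) ≫ codiag x := by
    apply coprod.hom_ext
    · apply coprod.hom_ext <;> simp only [codiag, coprod.inl_desc_assoc, coprod.inr_desc_assoc,
        coprod.inl_map_assoc, coprod.inl_desc, coprod.inr_desc, Category.id_comp]
    · simp only [codiag, coprod.inr_desc_assoc, coprod.inr_map_assoc, coprod.inr_desc,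
        Category.id_comp]
  refine IsPushout.of_isColimit (PushoutCocone.IsColimit.mk w (fun s => coprod.inl ≫ s.inl)
    (fun s => (eq_codiag_comp_of_comp_eq x s.condition).1.symm)
    (fun s => (eq_codiag_comp_of_comp_eq x s.condition).2.symm) (fun s m hm _ => ?_))
  rw [← hm]
  simp only [codiag, coprod.inl_desc_assoc, Category.id_comp]

end Codiag

/-- The snake identity for the self-duality of `x` in cospans over a
cocartesian category: the composite cospan
`x →ℓ x+x ←(x+∇) x+x+x →(∇+x) x+x ←r x`
(i.e. `(e + 1) ∘ (1 + c)` computed via pushout, with `e`the codiagonal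
evaluation and `c` the coevaluation) is isomorphic to the identity cospan. -/
theorem stmt9 [HasBinaryCoproducts C] [HasPushouts C] (x : C) :
    ((⟨x ⨿ x, coprod.inl, coprod.desc (𝟙 (x ⨿ x)) coprod.inr⟩ :
        Cospan C x ((x ⨿ x) ⨿ x)).comp
      (⟨x ⨿ x, coprod.map (codiag x) (𝟙 x), coprod.inr⟩ :
        Cospan C ((x ⨿ x) ⨿ x) x)).Isomorphic (Cospan.id x) :=
  Cospan.comp_isomorphic_of_isPushout (isPushout_codiag x) (coprod.inl_desc _ _)
    (coprod.inr_desc _ _)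
end

section
/- In a category with finite limits and colimits, every span a ← b → c with both legs invertible determines a companion cospan a → b ← c (with legs the inverses), together with 2-cells (spans of cospans) satisfying the companion equations of a double category. -/
open CategoryTheory CategoryTheory.Limits

universe v u

variable {C : Type u} [Category.{v} C]

/-- A span from `x` to `y` in `C`. -/
structure Span (C : Type u) [Category.{v} C] (x y : C) where
  apex : C
  l : apex ⟶ x
  r : apex ⟶ y

/-- A cubical span of cospans (a 2-cell of the double category): a cospan of
apexes between the top and bottom cospans, compatible with the left and right
vertical spans, so that all four side squares commute. -/
structure Cube {a b c d : C} (T : Cospan C a b) (B : Cospan C c d)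
    (L : Span C a c) (R : Span C b d) where
  apex : C
  toTop : apex ⟶ T.apex
  toBot : apex ⟶ B.apex
  fromL : L.apex ⟶ apex
  fromR : R.apex ⟶ apex
  w1 : fromL ≫ toTop = L.l ≫ T.l
  w2 : fromL ≫ toBot = L.r ≫ B.l
  w3 : fromR ≫ toTop = R.l ≫ T.r
  w4 : fromR ≫ toBot = R.r ≫ B.r

/-- Every span `a ← b → c` with invertible legs `f, g` determines a companion
cospan `a → b ← c` (with legs the inverses), together with 2-cells: the unit
cell (top the identity cospan on `a`, bottom the companion, left the identity
span, right the given span) and the counit cell (top the companion, bottom the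
identity cospan on `c`, left the given span, right the identity span).
Moreover, since 2-cells are identified when their outer squares coincide, the
companion equations hold: there are cells with the boundaries of the vertical
composite (the identity-like cell on the span) and of the horizontal composite
(the identity cell on the companion cospan). -/
theorem stmt11 [HasFiniteLimits C] [HasFiniteColimits C]
    {a b c : C} (f : b ⟶ a) (g : b ⟶ c) [IsIso f] [IsIso g] :
    Nonempty (Cube (Cospan.id a) (⟨b, inv f, inv g⟩ : Cospan C a c)
      (⟨a, 𝟙 a, 𝟙 a⟩ : Span C a a) (⟨b, f, g⟩ : Span C a c)) ∧
    Nonempty (Cube (⟨b, inv f, inv g⟩ : Cospan C a c) (Cospan.id c)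
      (⟨b, f, g⟩ : Span C a c) (⟨c, 𝟙 c, 𝟙 c⟩ : Span C c c)) ∧
    Nonempty (Cube (Cospan.id a) (Cospan.id c)
      (⟨b, f, g⟩ : Span C a c) (⟨b, f, g⟩ : Span C a c)) ∧
    Nonempty (Cube (⟨b, inv f, inv g⟩ : Cospan C a c) (⟨b, inv f, inv g⟩ : Cospan C a c)
      (⟨a, 𝟙 a, 𝟙 a⟩ : Span C a a) (⟨c, 𝟙 c, 𝟙 c⟩ : Span C c c)) := by
  refine ⟨⟨⟨a, 𝟙 a, inv f, 𝟙 a, f, ?_, ?_, ?_, ?_⟩⟩,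
    ⟨⟨c, inv g, 𝟙 c, g, 𝟙 c, ?_, ?_, ?_, ?_⟩⟩,
    ⟨⟨b, f, g, 𝟙 b, 𝟙 b, ?_, ?_, ?_, ?_⟩⟩,
    ⟨⟨b, 𝟙 b, 𝟙 b, inv f, inv g, ?_, ?_, ?_, ?_⟩⟩⟩ <;> simp [Cospan.id]
end
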